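/- Let $d, q, h_0, \delta, \alpha > 0$ satisfy $h_0 < \frac{\pi}{2}\sqrt{d/q}$, $\frac{d\pi^2}{4(1+\delta)^2 h_0^2} - q = \frac{1}{2}\left(\frac{d\pi^2}{4h_0^2} - q\right)$, and $\alpha = \frac{1}{2}\left(\frac{d\pi^2}{4h_0^2} - q\right)$. Define $\beta(t) = h_0(1+\delta - \frac{\delta}{2}e^{-\alpha t})$, $\psi(y) = \cos(\pi y/2)$, and $\bar v(t,x) = M e^{-\alpha t}\psi(x/\beta(t))$ for $M > 0$. Then for all $t > 0$ and $0 < x < \beta(t)$: $\bar v_t - d\,\bar v_{xx} - \bar v(q - \bar v) \geq M e^{-\alpha t}\psi(x/\beta(t))\left(-\alpha + \frac{\pi^2 d}{4(1+\delta)^2 h_0^2} - q + Me^{-\alpha t}\psi(x/\beta(t))\right) \geq 0$. -/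
import Mathlib
set_option maxHeartbeats 1000000


open Real

/-- the upper solution `v̄(t,x) = M e^{-αt} cos(πx/(2β(t)))` with
`β(t) = h₀(1+δ-(δ/2)e^{-αt})` satisfies the differential inequality
`v̄_t - d v̄_xx - v̄(q - v̄) ≥ Me^{-αt}ψ(x/β(t))(-α + π²d/(4(1+δ)²h₀²) - q + Me^{-αt}ψ(x/β(t))) ≥ 0`. -/
theorem stmt11 (d q h0 δ α M : ℝ) (hd : 0 < d) (hq : 0 < q) (hh0 : 0 < h0)
    (hδ : 0 < δ) (hα : 0 < α) (hM : 0 < M)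
    (hsmall : h0 < Real.pi / 2 * Real.sqrt (d / q))
    (hδeq : d * Real.pi ^ 2 / (4 * (1 + δ) ^ 2 * h0 ^ 2) - q
      = (1 / 2) * (d * Real.pi ^ 2 / (4 * h0 ^ 2) - q))
    (hαeq : α = (1 / 2) * (d * Real.pi ^ 2 / (4 * h0 ^ 2) - q)) :
    ∀ t x : ℝ, 0 < t → 0 < x →
      x < h0 * (1 + δ - δ / 2 * Real.exp (-α * t)) →
      (deriv (fun s => M * Real.exp (-α * s) *
            Real.cos (Real.pi * (x / (h0 * (1 + δ - δ / 2 * Real.exp (-α * s)))) / 2)) t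
        - d * deriv (deriv (fun y => M * Real.exp (-α * t) *
            Real.cos (Real.pi * (y / (h0 * (1 + δ - δ / 2 * Real.exp (-α * t)))) / 2))) x
        - (M * Real.exp (-α * t) *
            Real.cos (Real.pi * (x / (h0 * (1 + δ - δ / 2 * Real.exp (-α * t)))) / 2))
          * (q - M * Real.exp (-α * t) *
            Real.cos (Real.pi * (x / (h0 * (1 + δ - δ / 2 * Real.exp (-α * t)))) / 2))
        ≥ M * Real.exp (-α * t) *
            Real.cos (Real.pi * (x / (h0 * (1 + δ - δ / 2 * Real.exp (-α * t)))) / 2)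
          * (-α + Real.pi ^ 2 * d / (4 * (1 + δ) ^ 2 * h0 ^ 2) - q
            + M * Real.exp (-α * t) *
              Real.cos (Real.pi * (x / (h0 * (1 + δ - δ / 2 * Real.exp (-α * t)))) / 2)))
      ∧ 0 ≤ M * Real.exp (-α * t) *
            Real.cos (Real.pi * (x / (h0 * (1 + δ - δ / 2 * Real.exp (-α * t)))) / 2)
          * (-α + Real.pi ^ 2 * d / (4 * (1 + δ) ^ 2 * h0 ^ 2) - q
            + M * Real.exp (-α * t) *
              Real.cos (Real.pi * (x / (h0 * (1 + δ - δ / 2 * Real.exp (-α * t)))) / 2)) := by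
  intro t x ht hx hxB
  have hE0 : (0:ℝ) < Real.exp (-α * t) := Real.exp_pos _
  have hE1 : Real.exp (-α * t) ≤ 1 := by
    apply Real.exp_le_one_iff.mpr
    nlinarith
  set E := Real.exp (-α * t) with hEdef
  set B := h0 * (1 + δ - δ / 2 * E) with hBdef
  have hBpos : 0 < B := by
    have h1 : (0:ℝ) < 1 + δ - δ / 2 * E := by nlinarith
    exact mul_pos hh0 h1
  have hBle : B ≤ h0 * (1 + δ) := by
    have : 1 + δ - δ / 2 * E ≤ 1 + δ := by nlinarith
    nlinarith
  -- time derivative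
  have hexp : HasDerivAt (fun s : ℝ => Real.exp (-α * s)) (E * -α) t := by
    have h1 : HasDerivAt (fun s : ℝ => -α * s) (-α) t := by
      simpa using (hasDerivAt_id t).const_mul (-α)
    exact (Real.hasDerivAt_exp (-α * t)).comp t h1
  have hβd : HasDerivAt (fun s : ℝ => h0 * (1 + δ - δ / 2 * Real.exp (-α * s)))
      (h0 * -(δ / 2 * (E * -α))) t :=
    ((hexp.const_mul (δ / 2)).const_sub (1 + δ)).const_mul h0
  have hquot : HasDerivAt (fun s : ℝ => x / (h0 * (1 + δ - δ / 2 * Real.exp (-α * s))))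
      ((0 * B - x * (h0 * -(δ / 2 * (E * -α)))) / B ^ 2) t :=
    (hasDerivAt_const t x).div hβd hBpos.ne'
  have hu : HasDerivAt (fun s : ℝ => Real.pi * (x / (h0 * (1 + δ - δ / 2 * Real.exp (-α * s)))) / 2)
      (Real.pi * ((0 * B - x * (h0 * -(δ / 2 * (E * -α)))) / B ^ 2) / 2) t :=
    (hquot.const_mul Real.pi).div_const 2
  have hcos : HasDerivAt (fun s : ℝ => Real.cos (Real.pi * (x / (h0 * (1 + δ - δ / 2 * Real.exp (-α * s)))) / 2))
      (-Real.sin (Real.pi * (x / B) / 2) * (Real.pi * ((0 * B - x * (h0 * -(δ / 2 * (E * -α)))) / B ^ 2) / 2)) t :=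
    (Real.hasDerivAt_cos _).comp t hu
  have hF : HasDerivAt (fun s : ℝ => M * Real.exp (-α * s) *
        Real.cos (Real.pi * (x / (h0 * (1 + δ - δ / 2 * Real.exp (-α * s)))) / 2))
      (M * (E * -α) * Real.cos (Real.pi * (x / B) / 2)
        + M * E * (-Real.sin (Real.pi * (x / B) / 2) * (Real.pi * ((0 * B - x * (h0 * -(δ / 2 * (E * -α)))) / B ^ 2) / 2))) t :=
    (hexp.const_mul M).mul hcos
  -- space derivatives
  have hg' : deriv (fun y : ℝ => M * E * Real.cos (Real.pi * (y / B) / 2))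
      = fun y : ℝ => M * E * (-Real.sin (Real.pi * (y / B) / 2) * (Real.pi * (1 / B) / 2)) := by
    funext y
    have hy : HasDerivAt (fun z : ℝ => Real.pi * (z / B) / 2) (Real.pi * (1 / B) / 2) y :=
      (((hasDerivAt_id y).div_const B).const_mul Real.pi).div_const 2
    exact (((Real.hasDerivAt_cos _).comp y hy).const_mul (M * E)).deriv
  have hg2 : HasDerivAt (fun y : ℝ => M * E * (-Real.sin (Real.pi * (y / B) / 2) * (Real.pi * (1 / B) / 2)))
      (M * E * (-(Real.cos (Real.pi * (x / B) / 2) * (Real.pi * (1 / B) / 2)) * (Real.pi * (1 / B) / 2))) x := by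
    have hy : HasDerivAt (fun z : ℝ => Real.pi * (z / B) / 2) (Real.pi * (1 / B) / 2) x :=
      (((hasDerivAt_id x).div_const B).const_mul Real.pi).div_const 2
    exact ((((Real.hasDerivAt_sin _).comp x hy).neg).mul_const (Real.pi * (1 / B) / 2)).const_mul (M * E)
  rw [hF.deriv, hg', hg2.deriv]
  clear_value E B
  clear hF hg2 hg' hcos hu hquot hβd hexp hsmall hEdef hBdef
  -- arithmetic
  have hxB1 : x / B < 1 := (div_lt_one hBpos).mpr hxB
  have hθ0 : 0 ≤ Real.pi * (x / B) / 2 := by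
    have := Real.pi_pos
    positivity
  have hθle : Real.pi * (x / B) / 2 ≤ Real.pi / 2 := by
    have hπ := Real.pi_pos
    have : Real.pi * (x / B) ≤ Real.pi * 1 := by
      apply mul_le_mul_of_nonneg_left hxB1.le hπ.le
    linarith
  have hc : 0 ≤ Real.cos (Real.pi * (x / B) / 2) := by
    apply Real.cos_nonneg_of_mem_Icc
    constructor <;> [linarith [Real.pi_pos]; linarith]
  have hs : 0 ≤ Real.sin (Real.pi * (x / B) / 2) := by
    apply Real.sin_nonneg_of_nonneg_of_le_pi hθ0
    linarith [Real.pi_pos]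
  set c := Real.cos (Real.pi * (x / B) / 2) with hcdef
  set s0 := Real.sin (Real.pi * (x / B) / 2) with hsdef
  clear_value c s0
  have hMEc : 0 ≤ M * E * c := by positivity
  have hπ := Real.pi_pos
  have hkey : Real.pi ^ 2 * d / (4 * (1 + δ) ^ 2 * h0 ^ 2) ≤ d * (Real.pi * (1 / B) / 2) ^ 2 := by
    have h1 : d * (Real.pi * (1 / B) / 2) ^ 2 = Real.pi ^ 2 * d / (4 * B ^ 2) := by
      field_simp; ring
    rw [h1]
    apply div_le_div_of_nonneg_left (by positivity) (by positivity)
    nlinarith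
  constructor
  · have h1 : 0 ≤ M * E * s0 * (Real.pi * (x * (h0 * (δ / 2 * (α * E)))) / B ^ 2 / 2) := by
      positivity
    have h3 : M * E * c * (Real.pi ^ 2 * d / (4 * (1 + δ) ^ 2 * h0 ^ 2))
        ≤ M * E * c * (d * (Real.pi * (1 / B) / 2) ^ 2) :=
      mul_le_mul_of_nonneg_left hkey hMEc
    have key : (M * (E * -α) * c + M * E * (-s0 * (π * ((0 * B - x * (h0 * -(δ / 2 * (E * -α)))) / B ^ 2) / 2)) -
          d * (M * E * (-(c * (π * (1 / B) / 2)) * (π * (1 / B) / 2))) -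
        M * E * c * (q - M * E * c)) -
      (M * E * c * (-α + π ^ 2 * d / (4 * (1 + δ) ^ 2 * h0 ^ 2) - q + M * E * c))
      = (M * E * s0 * (π * (x * (h0 * (δ / 2 * (α * E)))) / B ^ 2 / 2))
        + (M * E * c * (d * (π * (1 / B) / 2) ^ 2) - M * E * c * (π ^ 2 * d / (4 * (1 + δ) ^ 2 * h0 ^ 2))) := by
      ring
    rw [ge_iff_le, ← sub_nonneg, key]
    exact add_nonneg h1 (by linarith [h3])
  · have hb : -α + Real.pi ^ 2 * d / (4 * (1 + δ) ^ 2 * h0 ^ 2) - q + M * E * c = M * E * c := by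
      have h2 : Real.pi ^ 2 * d / (4 * (1 + δ) ^ 2 * h0 ^ 2) = d * Real.pi ^ 2 / (4 * (1 + δ) ^ 2 * h0 ^ 2) := by
        ring
      rw [h2]
      linarith
    rw [hb]
    exact mul_nonneg hMEc hMEc
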